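/- Let d ≥ 1 and let s > d be an integer (so s ≥ 2). Then sup_{ε ∈ (0,2]} ε·(M(ε, G¹_s) − d) = 2(s − d)/(s − 1). -/
import Mathlib


open Polynomial MeasureTheory Set

/-- The covering number `M(ε, A)`: the minimal number of closed intervals of length `ε`
(i.e. closed balls of radius `ε/2`) whose union contains `A`. -/
noncomputable def covN (ε : ℝ) (A : Set ℝ) : ℕ :=
  sInf {N : ℕ | ∃ c : Fin N → ℝ, A ⊆ ⋃ i, Metric.closedBall (c i) (ε / 2)}

namespace SpanGridAux

/-- The grid set. -/
def grid (s : ℕ) : Set ℝ := {x : ℝ | ∃ k : ℕ, k < s ∧ x = -1 + 2 * (k : ℝ) / ((s : ℝ) - 1)}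

lemma covN_le_ceil (s : ℕ) (hs : 2 ≤ s) (ε : ℝ) (hε : 0 ≤ ε) (m : ℕ)
    (hm : (m : ℝ) * (2 / ((s : ℝ) - 1)) ≤ ε) :
    covN ε (grid s) ≤ (s + m) / (m + 1) := by
  have hs1 : (1 : ℝ) ≤ (s : ℝ) - 1 := by
    have : (2 : ℝ) ≤ (s : ℝ) := by exact_mod_cast hs
    linarith
  have hs0 : (0 : ℝ) < (s : ℝ) - 1 := by linarith
  apply Nat.sInf_le
  refine ⟨fun j => -1 + 2 * ((j : ℕ) * (m + 1) : ℕ) / ((s : ℝ) - 1) + (m : ℝ) / ((s : ℝ) - 1), ?_⟩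
  rintro x ⟨k, hk, rfl⟩
  have hq : s ≤ ((s + m) / (m + 1)) * (m + 1) := by
    have h1 := Nat.div_add_mod (s + m) (m + 1)
    have h2 := Nat.mod_lt (s + m) (show 0 < m + 1 by omega)
    have h3 : ((s + m) / (m + 1)) * (m + 1) = (m + 1) * ((s + m) / (m + 1)) :=
      Nat.mul_comm _ _
    omega
  have hj : k / (m + 1) < (s + m) / (m + 1) := by
    rw [Nat.div_lt_iff_lt_mul (by omega)]
    omega
  refine Set.mem_iUnion.mpr ⟨⟨k / (m + 1), hj⟩, ?_⟩
  simp only [Metric.mem_closedBall, Real.dist_eq]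
  set j : ℕ := k / (m + 1) with hjdef
  set r : ℕ := k % (m + 1) with hrdef
  have hkr : k = (m + 1) * j + r := (Nat.div_add_mod k (m + 1)).symm
  have hr : r ≤ m := by
    have := Nat.mod_lt k (show 0 < m + 1 by omega)
    omega
  have hcast : (k : ℝ) = ((m : ℝ) + 1) * (j : ℝ) + (r : ℝ) := by exact_mod_cast hkr
  have hjcast : ((j * (m + 1) : ℕ) : ℝ) = (j : ℝ) * ((m : ℝ) + 1) := by push_cast; ring
  have key : -1 + 2 * (k : ℝ) / ((s : ℝ) - 1) -
      (-1 + 2 * ((j * (m + 1) : ℕ) : ℝ) / ((s : ℝ) - 1) + (m : ℝ) / ((s : ℝ) - 1))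
      = (2 * (r : ℝ) - (m : ℝ)) / ((s : ℝ) - 1) := by
    rw [hjcast, hcast]; field_simp; ring
  rw [key]
  have hrr : (r : ℝ) ≤ (m : ℝ) := by exact_mod_cast hr
  have hr0 : (0 : ℝ) ≤ (r : ℝ) := by positivity
  have habs : |2 * (r : ℝ) - (m : ℝ)| ≤ (m : ℝ) := abs_le.mpr ⟨by linarith, by linarith⟩
  rw [abs_div, abs_of_pos hs0]
  have hstep : |2 * (r : ℝ) - (m : ℝ)| / ((s : ℝ) - 1) ≤ (m : ℝ) / ((s : ℝ) - 1) := by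
    gcongr
  refine hstep.trans ?_
  rw [← mul_div_assoc] at hm
  have hm' : (m : ℝ) * 2 ≤ ε * ((s : ℝ) - 1) := (div_le_iff₀ hs0).mp hm
  rw [div_le_div_iff₀ hs0 (by norm_num : (0 : ℝ) < 2)]
  linarith

lemma le_covN (s : ℕ) (hs : 2 ≤ s) (ε : ℝ) (hε : 0 < ε) (hεh : ε < 2 / ((s : ℝ) - 1)) :
    s ≤ covN ε (grid s) := by
  have hs1 : (1 : ℝ) ≤ (s : ℝ) - 1 := by
    have : (2 : ℝ) ≤ (s : ℝ) := by exact_mod_cast hs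
    linarith
  have hs0 : (0 : ℝ) < (s : ℝ) - 1 := by linarith
  have hne : {N : ℕ | ∃ c : Fin N → ℝ,
      grid s ⊆ ⋃ i, Metric.closedBall (c i) (ε / 2)}.Nonempty := by
    refine ⟨s, fun k => -1 + 2 * ((k : ℕ) : ℝ) / ((s : ℝ) - 1), ?_⟩
    rintro x ⟨k, hk, rfl⟩
    refine Set.mem_iUnion.mpr ⟨⟨k, hk⟩, ?_⟩
    simp only [Metric.mem_closedBall, dist_self]
    positivity
  apply le_csInf hne
  rintro N ⟨c, hc⟩
  have key : ∀ k : Fin s, ∃ i : Fin N,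
      (-1 + 2 * ((k : ℕ) : ℝ) / ((s : ℝ) - 1)) ∈ Metric.closedBall (c i) (ε / 2) := by
    intro k
    exact Set.mem_iUnion.mp (hc ⟨k, k.isLt, rfl⟩)
  choose F hF using key
  have hFinj : Function.Injective F := by
    intro k₁ k₂ hkk
    by_contra hne'
    have d1 := hF k₁
    have d2 := hF k₂
    rw [hkk] at d1
    simp only [Metric.mem_closedBall, Real.dist_eq] at d1 d2
    set a : ℝ := ((k₁ : ℕ) : ℝ)
    set b : ℝ := ((k₂ : ℕ) : ℝ)
    have htri0 := abs_sub_le (-1 + 2 * a / ((s : ℝ) - 1)) (c (F k₂))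
      (-1 + 2 * b / ((s : ℝ) - 1))
    have h4 : |c (F k₂) - (-1 + 2 * b / ((s : ℝ) - 1))| ≤ ε / 2 := by
      rw [abs_sub_comm]; exact d2
    have htri : |(-1 + 2 * a / ((s : ℝ) - 1)) - (-1 + 2 * b / ((s : ℝ) - 1))| ≤ ε := by
      linarith
    have hdiff : (-1 + 2 * a / ((s : ℝ) - 1)) - (-1 + 2 * b / ((s : ℝ) - 1))
        = 2 * (a - b) / ((s : ℝ) - 1) := by field_simp; ring
    rw [hdiff, abs_div, abs_of_pos hs0, abs_mul, abs_two] at htri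
    have hne2 : ((k₁ : ℕ) : ℤ) ≠ ((k₂ : ℕ) : ℤ) := by
      intro hcon
      apply hne'
      apply Fin.ext
      exact_mod_cast hcon
    have h1 : (1 : ℤ) ≤ |((k₁ : ℕ) : ℤ) - ((k₂ : ℕ) : ℤ)| :=
      Int.one_le_abs (sub_ne_zero.mpr hne2)
    have h1' : (1 : ℝ) ≤ |a - b| := by
      have : ((1 : ℤ) : ℝ) ≤ ((|((k₁ : ℕ) : ℤ) - ((k₂ : ℕ) : ℤ)| : ℤ) : ℝ) := by
        exact_mod_cast h1
      rwa [Int.cast_abs, Int.cast_sub, Int.cast_one, Int.cast_natCast, Int.cast_natCast] at this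
    have e1 : 2 * |a - b| ≤ ε * ((s : ℝ) - 1) := (div_le_iff₀ hs0).mp htri
    have e2 : ε * ((s : ℝ) - 1) < 2 := (lt_div_iff₀ hs0).mp hεh
    linarith
  simpa using Fintype.card_le_of_injective F hFinj

end SpanGridAux

/-- The metric `d`-span of the regular grid `G¹_s` of `s > d` equally spaced points in
`[−1,1]` equals `2(s−d)/(s−1)`. -/
theorem span_regular_grid (d s : ℕ) (hd : 1 ≤ d) (hs : d < s) :
    sSup {y : ℝ | ∃ ε ∈ Set.Ioc (0 : ℝ) 2,
      y = ε * ((covN ε {x : ℝ | ∃ k : ℕ, k < s ∧ x = -1 + 2 * (k : ℝ) / ((s : ℝ) - 1)} : ℝ)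
        - d)} = 2 * ((s : ℝ) - d) / ((s : ℝ) - 1) := by
  have hs2 : 2 ≤ s := by omega
  have hscast : (2 : ℝ) ≤ (s : ℝ) := by exact_mod_cast hs2
  have hs1 : (1 : ℝ) ≤ (s : ℝ) - 1 := by linarith
  have hs0 : (0 : ℝ) < (s : ℝ) - 1 := by linarith
  have hd1 : (1 : ℝ) ≤ (d : ℝ) := by exact_mod_cast hd
  have hsd : (d : ℝ) < (s : ℝ) := by exact_mod_cast hs
  have hsd1 : (1 : ℝ) ≤ (s : ℝ) - (d : ℝ) := by
    have : (d : ℝ) + 1 ≤ (s : ℝ) := by exact_mod_cast hs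
    linarith
  set A : Set ℝ := {x : ℝ | ∃ k : ℕ, k < s ∧ x = -1 + 2 * (k : ℝ) / ((s : ℝ) - 1)} with hA
  have hAgrid : A = SpanGridAux.grid s := rfl
  set h : ℝ := 2 / ((s : ℝ) - 1) with hh
  have hh0 : 0 < h := by positivity
  have hh2 : h ≤ 2 := by
    rw [hh, div_le_iff₀ hs0]; linarith
  set T : ℝ := 2 * ((s : ℝ) - d) / ((s : ℝ) - 1) with hT
  have hTh : T = h * ((s : ℝ) - d) := by rw [hT, hh]; ring
  have hT0 : 0 < T := by rw [hTh]; positivity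
  apply csSup_eq_of_forall_le_of_forall_lt_exists_gt
  · exact ⟨2 * ((covN 2 A : ℝ) - d), 2, ⟨by norm_num, le_refl 2⟩, rfl⟩
  · rintro y ⟨ε, ⟨hε0, hε2⟩, rfl⟩
    set m : ℕ := ⌊ε / h⌋₊ with hm
    have hm1 : (m : ℝ) * h ≤ ε := by
      have h1 : (m : ℝ) ≤ ε / h := Nat.floor_le (by positivity)
      calc (m : ℝ) * h ≤ (ε / h) * h := by nlinarith
        _ = ε := by field_simp
    have hm2 : ε ≤ ((m : ℝ) + 1) * h := by
      have h1 : ε / h < (m : ℝ) + 1 := Nat.lt_floor_add_one (ε / h)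
      have := (div_lt_iff₀ hh0).mp h1
      linarith
    have hcov : covN ε A ≤ (s + m) / (m + 1) := by
      rw [hAgrid]
      exact SpanGridAux.covN_le_ceil s hs2 ε hε0.le m (by rw [← hh]; exact hm1)
    set q : ℕ := (s + m) / (m + 1) with hqdef
    have hq : q * (m + 1) ≤ s + m := Nat.div_mul_le_self (s + m) (m + 1)
    have hqcast : (q : ℝ) * ((m : ℝ) + 1) ≤ (s : ℝ) + (m : ℝ) := by exact_mod_cast hq
    have hcq : (covN ε A : ℝ) ≤ (q : ℝ) := by exact_mod_cast hcov
    have hm0 : (0 : ℝ) ≤ (m : ℝ) := by positivity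
    rcases le_or_gt ((covN ε A : ℝ)) (d : ℝ) with hc | hc
    · have : ε * ((covN ε A : ℝ) - d) ≤ 0 :=
        mul_nonpos_of_nonneg_of_nonpos hε0.le (by linarith)
      linarith
    · have step1 : ε * ((covN ε A : ℝ) - d) ≤ ε * ((q : ℝ) - d) :=
        mul_le_mul_of_nonneg_left (by linarith) hε0.le
      have hqd : (d : ℝ) < (q : ℝ) := lt_of_lt_of_le hc hcq
      have step2 : ε * ((q : ℝ) - d) ≤ ((m : ℝ) + 1) * h * ((q : ℝ) - d) :=
        mul_le_mul_of_nonneg_right hm2 (by linarith)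
      have key : ((m : ℝ) + 1) * ((q : ℝ) - d) ≤ (s : ℝ) - d := by
        nlinarith [mul_nonneg hm0 (by linarith : (0 : ℝ) ≤ (d : ℝ) - 1)]
      have step3 : ((m : ℝ) + 1) * h * ((q : ℝ) - d) ≤ h * ((s : ℝ) - d) := by
        have h2 := mul_le_mul_of_nonneg_left key hh0.le
        calc ((m : ℝ) + 1) * h * ((q : ℝ) - d) = h * (((m : ℝ) + 1) * ((q : ℝ) - d)) := by ring
          _ ≤ h * ((s : ℝ) - d) := h2
      linarith [hTh.ge]
  · rintro w hw
    set W : ℝ := max w 0 with hW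
    have hW0 : 0 ≤ W := le_max_right _ _
    have hWlt : W < T := max_lt hw hT0
    set ε : ℝ := (W / ((s : ℝ) - d) + h) / 2 with hε
    have hε1 : W / ((s : ℝ) - d) < h := by
      rw [div_lt_iff₀ (by linarith)]
      rw [hTh] at hWlt
      nlinarith
    have hWd0 : 0 ≤ W / ((s : ℝ) - d) := by positivity
    have hε0 : 0 < ε := by rw [hε]; linarith
    have hεh : ε < h := by rw [hε]; linarith
    have hε2 : ε ≤ 2 := (hεh.trans_le hh2).le
    have hcovle : covN ε A ≤ s := by
      have := SpanGridAux.covN_le_ceil s hs2 ε hε0.le 0 (by simpa using hε0.le)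
      simpa [hAgrid] using this
    have hcovge : s ≤ covN ε A := by
      rw [hAgrid]
      exact SpanGridAux.le_covN s hs2 ε hε0 (by rw [← hh]; exact hεh)
    have hcov : covN ε A = s := le_antisymm hcovle hcovge
    refine ⟨ε * ((covN ε A : ℝ) - d), ⟨ε, ⟨hε0, hε2⟩, rfl⟩, ?_⟩
    rw [hcov]
    have hWε : W < ε * ((s : ℝ) - d) := by
      have hWeq : W = (W / ((s : ℝ) - d)) * ((s : ℝ) - d) := by field_simp
      have : W / ((s : ℝ) - d) < ε := by rw [hε]; linarith
      nlinarith
    calc w ≤ W := le_max_left _ _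
      _ < ε * ((s : ℝ) - d) := hWε
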